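/- arXiv:2201.09304 — 6 statements merged into one kernel-verified Lean document; each statement's English description precedes it below -/
import Mathlib

section
/- Let (V, φ) be a Frobenius space over E = k((π)) with maximal integral model V_O. Let T be a φ-stable O_E-lattice in V of rank r, and let (e_1 ≤ … ≤ e_r) be the valuations of the elementary divisors of the inclusion φ(σ*T) ⊆ T. If s is a non-negative integer with e_r ≤ s(q−1), then V_O ⊆ π^{−s}·T. -/
def IsLatticeIn {k : Type*} [Field k] {V : Type*} [AddCommGroup V]
    [Module (LaurentSeries k) V] [Module (PowerSeries k) V]
    (L : Submodule (PowerSeries k) V) : Prop :=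
  L.FG ∧ Submodule.span (LaurentSeries k) (L : Set V) = ⊤

def IsStable {k : Type*} [Field k] {V : Type*} [AddCommGroup V]
    [Module (LaurentSeries k) V] [Module (PowerSeries k) V]
    {σ : LaurentSeries k →+* LaurentSeries k} (φ : V →ₛₗ[σ] V)
    (L : Submodule (PowerSeries k) V) : Prop :=
  ∀ x ∈ L, φ x ∈ L

/-- The `O_E`-submodule `φ(σ*L)`. -/
noncomputable def phiSpan {k : Type*} [Field k] {V : Type*} [AddCommGroup V]
    [Module (LaurentSeries k) V] [Module (PowerSeries k) V]
    {σ : LaurentSeries k →+* LaurentSeries k} (φ : V →ₛₗ[σ] V)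
    (L : Submodule (PowerSeries k) V) : Submodule (PowerSeries k) V :=
  Submodule.span (PowerSeries k) (⇑φ '' (L : Set V))

/-!
Write `e = s(q-1)`. The Smith form gives `π^e T ⊆ φ(σ*T)`, so `φ` maps an `O_E`-basis `B` of `T`
to an `E`-basis `C` of `V` whose `O_E`-span contains `π^e T`. If `π^(d+1) φ(y) ∈ T` with `d ≥ s`
and `a_i` are the `B`-coordinates of `y`, then the `C`-coordinates `π^(e+d+1) a_i^q` of
`π^(e+d+1) φ(y)` are integral, i.e. `q v(a_i) ≥ -(e+d+1) > -q(d+1)`; hence `v(a_i) ≥ -d` and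
`π^d y ∈ T`. Since `V_O` is finitely generated, `π^N V_O ⊆ T` for some `N`, and as `φ(V_O) ⊆ V_O`
the exponent can be lowered one step at a time down to `s`.
-/

open scoped PowerSeries LaurentSeries
open WithZero

namespace LaurentSeries

variable {K : Type*} [Field K]

theorem algebraMap_X_pow_mul_mem_range_iff (a : K⸨X⸩) (d : ℕ) :
    algebraMap K⟦X⟧ K⸨X⸩ (PowerSeries.X ^ d) * a ∈ Set.range (algebraMap K⟦X⟧ K⸨X⸩) ↔
      Valued.v a ≤ exp (d : ℤ) := by
  have hrange : Set.range (algebraMap K⟦X⟧ K⸨X⸩) = {f | Valued.v f ≤ 1} := by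
    ext f
    simp [val_le_one_iff_eq_coe, coe_algebraMap]
  rw [hrange, Set.mem_ofPred_eq, map_mul, map_pow, coe_algebraMap, valuation_X_pow, exp_neg,
    inv_mul_le_one₀ exp_pos]

theorem exists_algebraMap_X_pow_mul_mem_range (a : K⸨X⸩) :
    ∃ d : ℕ, algebraMap K⟦X⟧ K⸨X⸩ (PowerSeries.X ^ d) * a ∈ Set.range (algebraMap K⟦X⟧ K⸨X⸩) := by
  simp_rw [algebraMap_X_pow_mul_mem_range_iff]
  rcases eq_or_ne (Valued.v a) 0 with ha | ha
  · exact ⟨0, by simp [ha]⟩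
  · exact ⟨(log (Valued.v a)).toNat, le_exp_of_log_le (Int.self_le_toNat _)⟩

theorem algebraMap_X_pow_mul_mem_range_of_pow {q c d : ℕ} (hcd : c < q * (d + 1)) {a : K⸨X⸩}
    (h : algebraMap K⟦X⟧ K⸨X⸩ (PowerSeries.X ^ c) * a ^ q ∈ Set.range (algebraMap K⟦X⟧ K⸨X⸩)) :
    algebraMap K⟦X⟧ K⸨X⸩ (PowerSeries.X ^ d) * a ∈ Set.range (algebraMap K⟦X⟧ K⸨X⸩) := by
  rw [algebraMap_X_pow_mul_mem_range_iff, map_pow] at *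
  rw [← lt_mul_exp_iff_le exp_ne_zero, ← exp_add]
  refine lt_of_pow_lt_pow_left' q (h.trans_lt ?_)
  rw [← exp_nsmul, exp_lt_exp, nsmul_eq_mul]
  exact_mod_cast hcd

end LaurentSeries

open Submodule
open scoped nonZeroDivisors

namespace Submodule

theorem pow_smul_mem_of_le {R M : Type*} [CommSemiring R] [AddCommMonoid M] [Module R M]
    {T : Submodule R M} {π : R} {m n : ℕ} {y : M} (hy : π ^ m • y ∈ T) (hmn : m ≤ n) :
    π ^ n • y ∈ T := by
  rw [← Nat.sub_add_cancel hmn, pow_add, mul_smul]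
  exact T.smul_mem _ hy

theorem pow_smul_mem_span_pow_smul {ι R M : Type*} [CommSemiring R] [AddCommMonoid M]
    [Module R M] (π : R) (v : ι → M) {ed : ι → ℕ} {e : ℕ} (hed : ∀ i, ed i ≤ e) :
    ∀ x ∈ span R (Set.range v), π ^ e • x ∈ span R (Set.range fun i => π ^ ed i • v i) := by
  intro x hx
  induction hx using span_induction with
  | mem x hx =>
    obtain ⟨i, rfl⟩ := hx
    exact pow_smul_mem_of_le (subset_span ⟨i, rfl⟩) (hed i)
  | zero => simp
  | add x y _ _ hx hy => rw [smul_add]; exact add_mem hx hy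
  | smul c x _ hx => rw [smul_comm]; exact smul_mem _ _ hx

theorem span_range_coe_basis {ι R M : Type*} [Semiring R] [AddCommMonoid M] [Module R M]
    {T : Submodule R M} (b : Module.Basis ι R T) : span R (Set.range fun i => (b i : M)) = T := by
  change span R (Set.range (T.subtype ∘ b)) = T
  rw [Set.range_comp, ← map_span, b.span_eq, map_top, range_subtype]

theorem span_eq_top_of_smul_mem {R K M : Type*} [CommSemiring R] [Field K] [Algebra R K]
    [AddCommMonoid M] [Module R M] [Module K M] [IsScalarTower R K M] {L N : Submodule R M}
    (hL : span K (L : Set M) = ⊤) {c : R} (hc : algebraMap R K c ≠ 0)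
    (hLN : ∀ x ∈ L, c • x ∈ N) : span K (N : Set M) = ⊤ := by
  refine eq_top_iff.2 (hL.ge.trans (span_le.2 fun x hx => ?_))
  rw [← inv_smul_smul₀ hc x, algebraMap_smul]
  exact smul_mem _ _ (subset_span (hLN x hx))

end Submodule

namespace Module.Basis

variable {ι R M : Type*}

theorem repr_smul_of_tower {S : Type*} [CommSemiring R] [Semiring S] [Algebra R S]
    [AddCommMonoid M] [Module R M] [Module S M] [IsScalarTower R S M]
    (B : Basis ι S M) (c : R) (y : M) (i : ι) :
    B.repr (c • y) i = algebraMap R S c * B.repr y i := by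
  rw [← algebraMap_smul S c y, map_smul, Finsupp.smul_apply, smul_eq_mul]

theorem repr_map_of_map_basis [Fintype ι] [CommSemiring R] [AddCommMonoid M] [Module R M]
    {σ : R →+* R} (φ : M →ₛₗ[σ] M) {B C : Basis ι R M} (hBC : ∀ i, φ (B i) = C i) (y : M) (i : ι) :
    C.repr (φ y) i = σ (B.repr y i) := by
  conv_lhs => rw [← B.sum_repr y]
  simp only [map_sum φ, LinearMap.map_smulₛₗ, hBC]
  exact congrFun (C.repr_sum_self _) i

end Module.Basis

section Lattice

variable {R K M ι : Type*} [CommRing R] [Field K] [Algebra R K] [IsFractionRing R K]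
  [AddCommGroup M] [Module R M] [Module K M] [IsScalarTower R K M]

noncomputable def Submodule.latticeBasis {T : Submodule R M} (hT : span K (T : Set M) = ⊤)
    (b : Module.Basis ι R T) : Module.Basis ι K M :=
  .mk ((b.linearIndependent.map' T.subtype T.ker_subtype).localization K R⁰) <| by
    change ⊤ ≤ span K (Set.range fun i => (b i : M))
    rw [← span_span_of_tower R, span_range_coe_basis, hT]

@[simp]
theorem Submodule.latticeBasis_apply {T : Submodule R M} (hT : span K (T : Set M) = ⊤)
    (b : Module.Basis ι R T) (i : ι) : latticeBasis hT b i = b i :=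
  Module.Basis.mk_apply ..

theorem Submodule.span_range_latticeBasis {T : Submodule R M} (hT : span K (T : Set M) = ⊤)
    (b : Module.Basis ι R T) : span R (Set.range (latticeBasis hT b)) = T := by
  rw [show ⇑(latticeBasis hT b) = fun i => (b i : M) from funext (latticeBasis_apply hT b),
    span_range_coe_basis]

end Lattice

section LaurentSeriesModule

variable {k V ι : Type*} [Field k] [AddCommGroup V] [Module k⸨X⸩ V] [Module k⟦X⟧ V]
  [IsScalarTower k⟦X⟧ k⸨X⸩ V]

theorem exists_X_pow_smul_mem {T : Submodule k⟦X⟧ V} (hT : span k⸨X⸩ (T : Set V) = ⊤) (y : V) :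
    ∃ m : ℕ, (PowerSeries.X : k⟦X⟧) ^ m • y ∈ T := by
  have hy : y ∈ span k⸨X⸩ (T : Set V) := hT ▸ mem_top
  induction hy using span_induction with
  | mem x hx => exact ⟨0, by simpa using hx⟩
  | zero => exact ⟨0, by simp⟩
  | add x y _ _ hx hy =>
    obtain ⟨m, hm⟩ := hx
    obtain ⟨n, hn⟩ := hy
    refine ⟨m + n, ?_⟩
    rw [smul_add]
    exact add_mem (pow_smul_mem_of_le hm (by omega)) (pow_smul_mem_of_le hn (by omega))
  | smul a x _ hx =>
    obtain ⟨m, hm⟩ := hx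
    obtain ⟨d, c, hc⟩ := LaurentSeries.exists_algebraMap_X_pow_mul_mem_range a
    refine ⟨d + m, ?_⟩
    have hcx : (PowerSeries.X : k⟦X⟧) ^ (d + m) • a • x = c • (PowerSeries.X : k⟦X⟧) ^ m • x := by
      rw [← algebraMap_smul k⸨X⸩ (_ ^ (d + m)), ← algebraMap_smul k⸨X⸩ (_ ^ m),
        ← algebraMap_smul k⸨X⸩ c, smul_smul, smul_smul, hc, pow_add, map_mul]
      congr 1
      ring
    rw [hcx]
    exact T.smul_mem c hm

theorem exists_X_pow_smul_le {T L : Submodule k⟦X⟧ V} (hT : span k⸨X⸩ (T : Set V) = ⊤)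
    (hL : L.FG) : ∃ N : ℕ, ∀ y ∈ L, (PowerSeries.X : k⟦X⟧) ^ N • y ∈ T := by
  classical
  obtain ⟨S, rfl⟩ := hL
  choose m hm using exists_X_pow_smul_mem hT
  refine ⟨S.sup m, fun y hy => ?_⟩
  induction hy using span_induction with
  | mem x hx => exact pow_smul_mem_of_le (hm x) (Finset.le_sup hx)
  | zero => simp
  | add x y _ _ hx hy => rw [smul_add]; exact add_mem hx hy
  | smul c x _ hx => rw [smul_comm]; exact T.smul_mem c hx

variable {q : ℕ} {σ : k⸨X⸩ →+* k⸨X⸩}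

theorem map_powerSeries_smul (hσ : ∀ x, σ x = x ^ q) (φ : V →ₛₗ[σ] V) (c : k⟦X⟧) (x : V) :
    φ (c • x) = c ^ q • φ x := by
  rw [← algebraMap_smul k⸨X⸩ c x, LinearMap.map_smulₛₗ, hσ, ← map_pow, algebraMap_smul]

theorem phiSpan_span (hσ : ∀ x, σ x = x ^ q) (φ : V →ₛₗ[σ] V) (v : ι → V) :
    phiSpan φ (span k⟦X⟧ (Set.range v)) = span k⟦X⟧ (Set.range fun i => φ (v i)) := by
  refine le_antisymm (span_le.2 ?_) (span_mono ?_)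
  · rintro _ ⟨x, hx, rfl⟩
    induction hx using span_induction with
    | mem x hx => obtain ⟨i, rfl⟩ := hx; exact subset_span ⟨i, rfl⟩
    | zero => simp
    | add x y _ _ hx hy => rw [map_add]; exact add_mem hx hy
    | smul c x _ hx => rw [map_powerSeries_smul hσ φ]; exact smul_mem _ _ hx
  · rintro _ ⟨i, rfl⟩
    exact ⟨v i, subset_span ⟨i, rfl⟩, rfl⟩

variable [Fintype ι] {T : Submodule k⟦X⟧ V} (hT : span k⸨X⸩ (T : Set V) = ⊤)
  (b : Module.Basis ι k⟦X⟧ T)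
include hT

theorem exists_basis_map_basis_of_phiSpan_eq (hσ : ∀ x, σ x = x ^ q) (φ : V →ₛₗ[σ] V)
    {ed : ι → ℕ} {e : ℕ} (hed : ∀ i, ed i ≤ e)
    (hsmith : phiSpan φ T =
      span k⟦X⟧ (Set.range fun i => (PowerSeries.X : k⟦X⟧) ^ ed i • (b i : V))) :
    ∃ C : Module.Basis ι k⸨X⸩ V, (∀ i, φ (b i) = C i) ∧
      ∀ x ∈ T, (PowerSeries.X : k⟦X⟧) ^ e • x ∈ span k⟦X⟧ (Set.range C) := by
  have hTφ : ∀ x ∈ T,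
      (PowerSeries.X : k⟦X⟧) ^ e • x ∈ span k⟦X⟧ (Set.range fun i => φ (b i)) := by
    intro x hx
    rw [← phiSpan_span hσ φ, span_range_coe_basis, hsmith]
    rw [← span_range_coe_basis b] at hx
    exact pow_smul_mem_span_pow_smul _ _ hed x hx
  have hspan : span k⸨X⸩ (Set.range fun i => φ (b i)) = ⊤ := by
    rw [← span_span_of_tower k⟦X⟧ k⸨X⸩]
    exact span_eq_top_of_smul_mem hT (by simp) hTφ
  refine ⟨basisOfTopLeSpanOfCardEqFinrank _ hspan.ge
    (Module.finrank_eq_card_basis (latticeBasis hT b)).symm, fun i => ?_, ?_⟩ <;>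
    rw [coe_basisOfTopLeSpanOfCardEqFinrank]
  exact hTφ

theorem X_pow_smul_mem_of_X_pow_succ_smul_map_mem (hσ : ∀ x, σ x = x ^ q) (φ : V →ₛₗ[σ] V)
    {C : Module.Basis ι k⸨X⸩ V} (hbC : ∀ i, φ (b i) = C i) {e d : ℕ}
    (hTC : ∀ x ∈ T, (PowerSeries.X : k⟦X⟧) ^ e • x ∈ span k⟦X⟧ (Set.range C))
    (hed : e + (d + 1) < q * (d + 1)) {y : V} (hy : (PowerSeries.X : k⟦X⟧) ^ (d + 1) • φ y ∈ T) :
    (PowerSeries.X : k⟦X⟧) ^ d • y ∈ T := by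
  set B := latticeBasis hT b
  rw [← span_range_latticeBasis hT b, B.mem_span_iff_repr_mem k⟦X⟧]
  intro i
  have h := (C.mem_span_iff_repr_mem k⟦X⟧ _).1 (hTC _ hy) i
  have hBC : ∀ i, φ (B i) = C i := by simpa [B] using hbC
  rw [smul_smul, ← pow_add, C.repr_smul_of_tower, Module.Basis.repr_map_of_map_basis φ hBC, hσ] at h
  rw [B.repr_smul_of_tower]
  exact LaurentSeries.algebraMap_X_pow_mul_mem_range_of_pow hed h

end LaurentSeriesModule

theorem maximal_model_le_of_range_le_general
    {k : Type*} [Field k] {p q e₀ : ℕ} (hp : p.Prime)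
    (he₀ : 0 < e₀) (hq : q = p ^ e₀)
    {σ : LaurentSeries k →+* LaurentSeries k} (hσ : ∀ x, σ x = x ^ q)
    {V : Type*} [AddCommGroup V] [Module (LaurentSeries k) V]
    [Module (PowerSeries k) V] [IsScalarTower (PowerSeries k) (LaurentSeries k) V]
    (φ : V →ₛₗ[σ] V)
    -- `VO` is the maximal `φ`-stable `O_E`-lattice in `V`
    (VO : Submodule (PowerSeries k) V)
    (hVO : IsLatticeIn VO ∧ IsStable φ VO)
    -- `T` is a `φ`-stable lattice …
    (T : Submodule (PowerSeries k) V) (hT : IsLatticeIn T)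
    -- … with elementary divisors `π^{ed i}` relative to `φ(σ*T) ⊆ T` (Smith normal form:
    -- there is an `O_E`-basis `b` of `T` with `φ(σ*T) = ⊕ᵢ π^{ed i}·O_E·(b i)`) …
    {ι : Type*} [Fintype ι] (b : Module.Basis ι (PowerSeries k) ↥T) (ed : ι → ℕ)
    (hsmith : phiSpan φ T =
      Submodule.span (PowerSeries k)
        (Set.range fun i => (PowerSeries.X : PowerSeries k) ^ ed i • ((b i : ↥T) : V)))
    -- … all of valuation at most `s(q-1)`.
    (s : ℕ) (hrange : ∀ i, ed i ≤ s * (q - 1)) :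
    ∀ x ∈ VO, (PowerSeries.X : PowerSeries k) ^ s • x ∈ T := by
  have hq2 : 2 ≤ q := hq ▸ Nat.one_lt_pow he₀.ne' hp.one_lt
  obtain ⟨C, hbC, hTC⟩ := exists_basis_map_basis_of_phiSpan_eq hT.2 b hσ φ hrange hsmith
  have hstep (d : ℕ) (hd : s ≤ d) (hsucc : ∀ y ∈ VO, (PowerSeries.X : k⟦X⟧) ^ (d + 1) • y ∈ T) :
      ∀ y ∈ VO, (PowerSeries.X : k⟦X⟧) ^ d • y ∈ T := by
    intro y hy
    refine X_pow_smul_mem_of_X_pow_succ_smul_map_mem hT.2 b hσ φ hbC hTC ?_ (hsucc _ (hVO.2 y hy))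
    have hq1 : q - 1 + 1 = q := by omega
    nlinarith [Nat.mul_le_mul_left (q - 1) hd]
  obtain ⟨N, hN⟩ := exists_X_pow_smul_le hT.2 hVO.1.1
  exact Nat.decreasingInduction' (P := fun d => ∀ y ∈ VO, (PowerSeries.X : k⟦X⟧) ^ d • y ∈ T)
    (fun d _ hd => hstep d hd) (Nat.le_add_right s N)
    fun y hy => pow_smul_mem_of_le (hN y hy) (Nat.le_add_left N s)

theorem maximal_model_le_of_range_le
    {k : Type*} [Field k] [PerfectField k] {p q e₀ : ℕ} (hp : p.Prime) [CharP k p]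
    (he₀ : 0 < e₀) (hq : q = p ^ e₀)
    {σ : LaurentSeries k →+* LaurentSeries k} (hσ : ∀ x, σ x = x ^ q)
    {V : Type*} [AddCommGroup V] [Module (LaurentSeries k) V]
    [Module (PowerSeries k) V] [IsScalarTower (PowerSeries k) (LaurentSeries k) V]
    [FiniteDimensional (LaurentSeries k) V]
    (φ : V →ₛₗ[σ] V) (hφ : Function.Bijective φ)
    -- `VO` is the maximal `φ`-stable `O_E`-lattice in `V`
    (VO : Submodule (PowerSeries k) V)
    (hVO : IsLatticeIn VO ∧ IsStable φ VO)
    (hVOmax : ∀ L : Submodule (PowerSeries k) V, IsLatticeIn L ∧ IsStable φ L → L ≤ VO)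
    -- `T` is a `φ`-stable lattice …
    (T : Submodule (PowerSeries k) V) (hT : IsLatticeIn T) (hTstab : IsStable φ T)
    -- … with elementary divisors `π^{ed i}` relative to `φ(σ*T) ⊆ T` (Smith normal form:
    -- there is an `O_E`-basis `b` of `T` with `φ(σ*T) = ⊕ᵢ π^{ed i}·O_E·(b i)`) …
    {ι : Type*} [Fintype ι] (b : Module.Basis ι (PowerSeries k) ↥T) (ed : ι → ℕ)
    (hsmith : phiSpan φ T =
      Submodule.span (PowerSeries k)
        (Set.range fun i => (PowerSeries.X : PowerSeries k) ^ ed i • ((b i : ↥T) : V)))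
    -- … all of valuation at most `s(q-1)`.
    (s : ℕ) (hrange : ∀ i, ed i ≤ s * (q - 1)) :
    ∀ x ∈ VO, (PowerSeries.X : PowerSeries k) ^ s • x ∈ T :=
  maximal_model_le_of_range_le_general hp he₀ hq hσ φ VO hVO T hT b ed hsmith s hrange
end

section
/- Let k be a perfect field containing F_q, let W be a finite-dimensional k-vector space and let ψ : W → W be a q-semilinear map (ψ(cw) = c^q ψ(w)). Then W decomposes uniquely as a direct sum W = A ⊕ B of ψ-stable k-subspaces such that ψ restricted to A is bijective and ψ restricted to B is nilpotent. -/
/-!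
The kernels of the iterates `ψⁿ` form an increasing chain of subspaces and their images a
decreasing one; the images are subspaces because the Frobenius power `c ↦ c ^ q` is surjective
on the perfect field `k`. Both chains stabilise, say from `N` on, and Fitting's argument gives
`W = im ψᴺ ⊕ ker ψᴺ`, with `ψ` bijective on the image and nilpotent on the kernel. Conversely, if
`ψ` is bijective on `A` then `A = ψ A ⊆ im ψᴺ`, and if `ψ` is nilpotent on `B` then `B ⊆ ker ψᴺ`;
two pairs of complements that are comparable termwise coincide by modularity of the subspace
lattice.
-/

open Function

namespace Submodule

variable {R M : Type*} [Semiring R] [AddCommMonoid M] [Module R M] {σ : R →+* R}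

theorem coe_iterate_comap (f : M →ₛₗ[σ] M) (p : Submodule R M) (n : ℕ) :
    ((comap f)^[n] p : Set M) = f^[n] ⁻¹' p := by
  induction n with
  | zero => rfl
  | succ n ih => rw [iterate_succ_apply', comap_coe, ih, iterate_succ, Set.preimage_comp]

theorem coe_iterate_map [RingHomSurjective σ] (f : M →ₛₗ[σ] M) (p : Submodule R M) (n : ℕ) :
    ((map f)^[n] p : Set M) = f^[n] '' p := by
  induction n with
  | zero => simp
  | succ n ih => rw [iterate_succ_apply', map_coe, ih, iterate_succ', Set.image_comp]

end Submodule

namespace LinearMap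

open Submodule

section Semiring

variable {R M : Type*} [Semiring R] [AddCommMonoid M] [Module R M] {σ : R →+* R}
  (f : M →ₛₗ[σ] M)

-- `f ^ n` is not defined for a semilinear `f` (its iterates are `σⁿ`-semilinear), hence the
-- iterated `comap f` and `map f`.
def kerIterate (n : ℕ) : Submodule R M := (comap f)^[n] ⊥

def rangeIterate [RingHomSurjective σ] (n : ℕ) : Submodule R M := (map f)^[n] ⊤

variable {f}

theorem mem_kerIterate {n : ℕ} {x : M} : x ∈ f.kerIterate n ↔ f^[n] x = 0 := by
  rw [← SetLike.mem_coe, kerIterate, coe_iterate_comap]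
  rfl

theorem mem_rangeIterate [RingHomSurjective σ] {n : ℕ} {x : M} :
    x ∈ f.rangeIterate n ↔ x ∈ Set.range f^[n] := by
  rw [← SetLike.mem_coe, rangeIterate, coe_iterate_map, top_coe, Set.image_univ]

theorem kerIterate_mono : Monotone f.kerIterate :=
  monotone_nat_of_le_succ fun n x hx ↦ by
    rw [mem_kerIterate] at hx ⊢
    rw [iterate_succ_apply', hx, map_zero]

theorem rangeIterate_anti [RingHomSurjective σ] : Antitone f.rangeIterate :=
  antitone_nat_of_succ_le fun n x hx ↦ by
    obtain ⟨y, rfl⟩ := mem_rangeIterate.1 hx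
    exact mem_rangeIterate.2 ⟨f y, (iterate_succ_apply f n y).symm⟩

theorem mapsTo_kerIterate (n : ℕ) : Set.MapsTo f (f.kerIterate n) (f.kerIterate n) := by
  intro x hx
  rw [SetLike.mem_coe, mem_kerIterate] at hx ⊢
  rw [← iterate_succ_apply, iterate_succ_apply', hx, map_zero]

theorem mapsTo_rangeIterate [RingHomSurjective σ] (n : ℕ) :
    Set.MapsTo f (f.rangeIterate n) (f.rangeIterate n) :=
  fun _ hx ↦ rangeIterate_anti n.le_succ <| by
    obtain ⟨y, rfl⟩ := mem_rangeIterate.1 hx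
    exact mem_rangeIterate.2 ⟨y, iterate_succ_apply' f n y⟩

theorem le_rangeIterate_of_surjOn [RingHomSurjective σ] {A : Submodule R M}
    (hA : Set.SurjOn f A A) (n : ℕ) : A ≤ f.rangeIterate n := by
  induction n with
  | zero => exact le_top
  | succ n ih =>
    intro x hx
    obtain ⟨y, hy, rfl⟩ := hA hx
    obtain ⟨z, rfl⟩ := mem_rangeIterate.1 (ih hy)
    exact mem_rangeIterate.2 ⟨z, iterate_succ_apply' f n z⟩

end Semiring

variable {R M : Type*} [Ring R] [AddCommGroup M] [Module R M] {σ : R →+* R}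
  [RingHomSurjective σ] {f : M →ₛₗ[σ] M}

variable (f) in
theorem exists_kerIterate_le_and_rangeIterate_le [IsNoetherian R M] [IsArtinian R M] :
    ∃ N, (∀ m, f.kerIterate m ≤ f.kerIterate N) ∧ ∀ m, f.rangeIterate N ≤ f.rangeIterate m := by
  obtain ⟨N₁, hN₁ : ∀ m, N₁ ≤ m → f.kerIterate N₁ = f.kerIterate m⟩ :=
    WellFoundedGT.monotone_chain_condition ⟨_, f.kerIterate_mono⟩
  obtain ⟨N₂, hN₂⟩ := WellFoundedLT.antitone_chain_condition f.rangeIterate_anti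
  refine ⟨max N₁ N₂, fun m ↦ ?_, fun m ↦ ?_⟩
  · calc f.kerIterate m ≤ f.kerIterate (max m (max N₁ N₂)) := kerIterate_mono (le_max_left _ _)
      _ = f.kerIterate (max N₁ N₂) := by
        rw [← hN₁ _ (le_max_left _ _), ← hN₁ _ ((le_max_left _ _).trans (le_max_right _ _))]
  · calc f.rangeIterate (max N₁ N₂) = f.rangeIterate (max m (max N₁ N₂)) := by
          rw [← hN₂ _ (le_max_right _ _), ← hN₂ _ ((le_max_right _ _).trans (le_max_right _ _))]
      _ ≤ f.rangeIterate m := rangeIterate_anti (le_max_left _ _)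

variable {N : ℕ}

theorem disjoint_rangeIterate_kerIterate (hK : f.kerIterate (N + N) ≤ f.kerIterate N) :
    Disjoint (f.rangeIterate N) (f.kerIterate N) := by
  refine disjoint_def.2 fun x hxR hxK ↦ ?_
  obtain ⟨y, rfl⟩ := mem_rangeIterate.1 hxR
  refine mem_kerIterate.1 (hK (mem_kerIterate.2 ?_))
  rwa [iterate_add_apply, ← mem_kerIterate]

theorem codisjoint_rangeIterate_kerIterate (hR : f.rangeIterate N ≤ f.rangeIterate (N + N)) :
    Codisjoint (f.rangeIterate N) (f.kerIterate N) := by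
  refine codisjoint_iff.2 (eq_top_iff'.2 fun x ↦ mem_sup.2 ?_)
  obtain ⟨y, hy⟩ := mem_rangeIterate.1 (hR (mem_rangeIterate.2 ⟨x, rfl⟩))
  rw [iterate_add_apply] at hy
  refine ⟨f^[N] y, mem_rangeIterate.2 ⟨y, rfl⟩, x - f^[N] y, mem_kerIterate.2 ?_, by abel⟩
  rw [iterate_map_sub f, hy, sub_self]

theorem bijOn_rangeIterate (hK : f.kerIterate 1 ≤ f.kerIterate N)
    (hdisj : Disjoint (f.rangeIterate N) (f.kerIterate N))
    (hR : f.rangeIterate N ≤ f.rangeIterate (N + 1)) :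
    Set.BijOn f (f.rangeIterate N) (f.rangeIterate N) := by
  refine ⟨mapsTo_rangeIterate N, fun x hx y hy hxy ↦ ?_, fun x hx ↦ ?_⟩
  · have hxyK : x - y ∈ f.kerIterate N :=
      hK (mem_kerIterate.2 (by rw [iterate_one, map_sub, hxy, sub_self]))
    exact sub_eq_zero.1 (disjoint_def.1 hdisj _ (sub_mem hx hy) hxyK)
  · obtain ⟨y, rfl⟩ := mem_rangeIterate.1 (hR hx)
    exact ⟨f^[N] y, mem_rangeIterate.2 ⟨y, rfl⟩, (iterate_succ_apply' f N y).symm⟩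

variable (f) in
theorem existsUnique_isCompl_bijOn_nilpotent [IsNoetherian R M] [IsArtinian R M] :
    ∃! AB : Submodule R M × Submodule R M,
      IsCompl AB.1 AB.2 ∧
      Set.BijOn f (AB.1 : Set M) (AB.1 : Set M) ∧
      Set.MapsTo f (AB.2 : Set M) (AB.2 : Set M) ∧
      ∃ n : ℕ, ∀ x ∈ AB.2, f^[n] x = 0 := by
  obtain ⟨N, hK, hR⟩ := exists_kerIterate_le_and_rangeIterate_le f
  have hcompl : IsCompl (f.rangeIterate N) (f.kerIterate N) :=
    ⟨disjoint_rangeIterate_kerIterate (hK _), codisjoint_rangeIterate_kerIterate (hR _)⟩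
  refine ⟨(f.rangeIterate N, f.kerIterate N), ⟨hcompl, bijOn_rangeIterate (hK 1) hcompl.1 (hR _),
    mapsTo_kerIterate N, N, fun x ↦ mem_kerIterate.1⟩, ?_⟩
  rintro ⟨A, B⟩ ⟨hAB, ⟨-, -, hA⟩, -, n, hB⟩
  have hAle : A ≤ f.rangeIterate N := le_rangeIterate_of_surjOn hA N
  have hBle : B ≤ f.kerIterate N := fun x hx ↦ hK n (mem_kerIterate.2 (hB x hx))
  exact Prod.ext
    ((le_iff_eq_of_codisjoint_of_disjoint hAB.2 (hcompl.1.symm.mono_left hBle)).1 hAle)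
    ((le_iff_eq_of_codisjoint_of_disjoint hAB.2.symm (hcompl.1.mono_left hAle)).1 hBle)

end LinearMap

theorem semisimple_nilpotent_decomposition_general
    {k : Type*} [Field k] [PerfectField k] {p q e : ℕ} (hp : p.Prime) [CharP k p]
    (hq : q = p ^ e)
    {σ : k →+* k} (hσ : ∀ x, σ x = x ^ q)
    {W : Type*} [AddCommGroup W] [Module k W] [FiniteDimensional k W]
    (ψ : W →ₛₗ[σ] W) :
    ∃! AB : Submodule k W × Submodule k W,
      IsCompl AB.1 AB.2 ∧
      Set.BijOn ψ (AB.1 : Set W) (AB.1 : Set W) ∧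
      Set.MapsTo ψ (AB.2 : Set W) (AB.2 : Set W) ∧
      ∃ n : ℕ, ∀ x ∈ AB.2, (⇑ψ)^[n] x = 0 := by
  have : Fact p.Prime := ⟨hp⟩
  have : PerfectRing k q := hq ▸ inferInstance
  have : RingHomSurjective σ :=
    ⟨by simpa only [← hσ] using (PerfectRing.bijective_frobenius (R := k) (p := q)).2⟩
  exact LinearMap.existsUnique_isCompl_bijOn_nilpotent ψ

theorem semisimple_nilpotent_decomposition
    {k : Type*} [Field k] [PerfectField k] {p q e : ℕ} (hp : p.Prime) [CharP k p]
    (he : 0 < e) (hq : q = p ^ e)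
    {σ : k →+* k} (hσ : ∀ x, σ x = x ^ q)
    {W : Type*} [AddCommGroup W] [Module k W] [FiniteDimensional k W]
    (ψ : W →ₛₗ[σ] W) :
    ∃! AB : Submodule k W × Submodule k W,
      IsCompl AB.1 AB.2 ∧
      Set.BijOn ψ (AB.1 : Set W) (AB.1 : Set W) ∧
      Set.MapsTo ψ (AB.2 : Set W) (AB.2 : Set W) ∧
      ∃ n : ℕ, ∀ x ∈ AB.2, (⇑ψ)^[n] x = 0 :=
  semisimple_nilpotent_decomposition_general hp hq hσ ψ
end

section
/- Let F be a field containing F_q, F^s a separable closure, and G = Gal(F^s/F). Let M be a finite-dimensional F^s-vector space with a q-semilinear bijective map ψ : M → M (meaning ψ(cm) = c^q ψ(m)). Then the F_q-subspace M^ψ = { m ∈ M : ψ(m) = m } of fixed points satisfies: the natural multiplication map M^ψ ⊗_{F_q} F^s → M is an isomorphism when M is obtained by base change from a Frobenius space over F. Concretely (Lang's theorem for semilinear maps, following Katz): for a finite-dimensional F^s-vector space M with bijective q-semilinear ψ, the map M^{ψ} ⊗_{F_q} F^s → M, m ⊗ c ↦ c·m, is an isomorphism. -/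
open scoped TensorProduct
open Polynomial

/-!
If `F_q`-independent fixed vectors had an `F^s`-linear relation, take one of minimal length
with a coefficient `1`; applying `ψ` and subtracting gives a shorter relation with coefficients
`c ^ q - c`, so all coefficients lie in `F_q`, which is absurd. This is injectivity.

For surjectivity let `N` be the `F^s`-span of `M^ψ`. If `N ≠ M`, then `ψ` induces a bijective
semilinear map of `M ⧸ N`, and this has a nonzero fixed vector: on the span of
`m, ψ m, …, ψ^[n] m` for a shortest relation `ψ^[n+1] m = ∑ aᵢ ψ^[i] m`, the fixed-point equation
reduces to one equation `P t = t` with `P' = 0` and `deg P ≥ 2`, and `P - X` is separable, so it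
has a nonzero root. A lift `x` of that vector has `ψ x - x ∈ N`; since `c ↦ c ^ q - c` is onto
(Artin–Schreier), `ψ - 1` maps `N` onto itself, so `x` can be corrected by an element of `N` to a
fixed vector, giving `x ∈ N`, a contradiction.
-/

theorem FiniteField.mem_range_algebraMap_of_pow_card_eq_self {F L : Type*} [Field F] [Fintype F]
    [Field L] [Algebra F L] {x : L} (hx : x ^ Fintype.card F = x) :
    x ∈ Set.range (algebraMap F L) := by
  have hsplit : (X ^ Fintype.card F - X : F[X]).Splits := by
    rw [splits_iff_card_roots, roots_X_pow_card_sub_X,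
      X_pow_card_sub_X_natDegree_eq F Fintype.one_lt_card]
    rfl
  have hroot : x ∈ ((X ^ Fintype.card F - X : F[X]).map (algebraMap F L)).roots := by
    rw [mem_roots (map_ne_zero (X_pow_card_sub_X_ne_zero F Fintype.one_lt_card))]
    simp [hx]
  rw [hsplit.roots_map_of_injective (algebraMap F L).injective, roots_X_pow_card_sub_X] at hroot
  obtain ⟨c, -, rfl⟩ := Multiset.mem_map.1 hroot
  exact ⟨c, rfl⟩

theorem IsSepClosed.exists_ne_eval_eq_self_of_derivative_eq_zero {K : Type*} [Field K]
    [IsSepClosed K] {p : K[X]} (hp : derivative p = 0) (hdeg : 1 < p.natDegree) (a : K) :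
    ∃ t ≠ a, p.eval t = t := by
  classical
  have hsep : (p - X).Separable := by
    rw [separable_def, derivative_sub, hp, derivative_X, zero_sub]
    exact isCoprime_one_right.neg_right
  have hcard : (p - X).roots.toFinset.card = p.natDegree := by
    rw [Multiset.toFinset_card_of_nodup (nodup_roots hsep),
      ← (splits_of_separable _ hsep).natDegree_eq_card_roots,
      natDegree_sub_eq_left_of_natDegree_lt (by rwa [natDegree_X])]
  obtain ⟨t, ht, hta⟩ := Finset.exists_mem_ne (hcard ▸ hdeg) a
  rw [Multiset.mem_toFinset, mem_roots', IsRoot.def, eval_sub, eval_X, sub_eq_zero] at ht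
  exact ⟨t, hta, ht.2⟩

/-- If `φ^[n+1] m = ∑_{i ≤ n} a i • φ^[i] m` for a `q`-semilinear `φ`, then
`∑_{i ≤ n} c i • φ^[i] m` is `φ`-fixed as soon as `c 0 = a 0 * t ^ q`,
`c (i + 1) = c i ^ q + a (i + 1) * t ^ q` and `c n = t`; `fixedCoeffPoly q a i` is `c i` as a
polynomial in `t`. -/
noncomputable def fixedCoeffPoly {K : Type*} [Field K] (q : ℕ) (a : ℕ → K) : ℕ → K[X]
  | 0 => C (a 0) * X ^ q
  | n + 1 => fixedCoeffPoly q a n ^ q + C (a (n + 1)) * X ^ q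

section fixedCoeffPoly

variable {K : Type*} [Field K] {q : ℕ}

theorem derivative_fixedCoeffPoly (a : ℕ → K) (hq : (q : K) = 0) (n : ℕ) :
    derivative (fixedCoeffPoly q a n) = 0 := by
  induction n with
  | zero => simp [fixedCoeffPoly, derivative_X_pow, hq]
  | succ n ih => simp [fixedCoeffPoly, derivative_pow, hq, ih]

theorem natDegree_fixedCoeffPoly (hq : 1 < q) {a : ℕ → K} (ha : a 0 ≠ 0) (n : ℕ) :
    (fixedCoeffPoly q a n).natDegree = q ^ (n + 1) := by
  induction n with
  | zero => simp [fixedCoeffPoly, natDegree_C_mul_X_pow _ _ ha]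
  | succ n ih =>
    have hpow : (fixedCoeffPoly q a n ^ q).natDegree = q ^ (n + 2) := by
      rw [natDegree_pow, ih]; ring
    rw [fixedCoeffPoly, natDegree_add_eq_left_of_natDegree_lt, hpow]
    calc _ ≤ q := natDegree_C_mul_X_pow_le _ _
      _ = q ^ 1 := (pow_one q).symm
      _ < _ := by rw [hpow]; exact Nat.pow_lt_pow_right hq (by omega)

end fixedCoeffPoly

section Semilinear

open Finset Submodule Function

variable {K V : Type*} [Field K] [AddCommGroup V] [Module K V] {σ : K →+* K} {q : ℕ}

theorem isFixedPt_sum_fixedCoeffPoly (φ : V →ₛₗ[σ] V) (hσ : ∀ x, σ x = x ^ q) {m : V} {n : ℕ}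
    {a : ℕ → K} (hrel : φ^[n + 1] m = ∑ i ∈ range (n + 1), a i • φ^[i] m) {t : K}
    (ht : (fixedCoeffPoly q a n).eval t = t) :
    φ (∑ i ∈ range (n + 1), (fixedCoeffPoly q a i).eval t • φ^[i] m) =
      ∑ i ∈ range (n + 1), (fixedCoeffPoly q a i).eval t • φ^[i] m := by
  set c : ℕ → K := fun i => (fixedCoeffPoly q a i).eval t
  calc φ (∑ i ∈ range (n + 1), c i • φ^[i] m)
      = ∑ i ∈ range (n + 1), c i ^ q • φ^[i + 1] m := by
        simp only [map_sum, LinearMap.map_smulₛₗ, hσ, iterate_succ_apply']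
    _ = ∑ i ∈ range n, c i ^ q • φ^[i + 1] m + t ^ q • φ^[n + 1] m := by
        rw [sum_range_succ, show c n = t from ht]
    _ = ∑ i ∈ range n, (c i ^ q + a (i + 1) * t ^ q) • φ^[i + 1] m + (a 0 * t ^ q) • m := by
        rw [hrel, smul_sum, sum_range_succ']
        simp only [smul_smul, add_smul, sum_add_distrib, mul_comm (t ^ q),
          iterate_zero_apply]
        abel
    _ = ∑ i ∈ range (n + 1), c i • φ^[i] m := by
        rw [sum_range_succ' _ n]
        simp [c, fixedCoeffPoly]

theorem linearIndependent_iterate_succ_iff (f : V → V) (m : V) (n : ℕ) :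
    LinearIndependent K (fun i : Fin (n + 1) => f^[i] m) ↔
      LinearIndependent K (fun i : Fin n => f^[i] m) ∧
        f^[n] m ∉ span K (Set.range fun i : Fin n => f^[i] m) := by
  have hsnoc : (fun i : Fin (n + 1) => f^[i] m) =
      Fin.snoc (fun i : Fin n => f^[i] m) (f^[n] m) := by
    funext i
    induction i using Fin.lastCases <;> simp
  rw [hsnoc, linearIndependent_finSnoc]

theorem exists_iterate_eq_sum_of_injective [FiniteDimensional K V] [Nontrivial V]
    (φ : V →ₛₗ[σ] V) (hφ : Injective φ) :
    ∃ (m : V) (n : ℕ) (a : ℕ → K), a 0 ≠ 0 ∧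
      LinearIndependent K (fun i : Fin (n + 1) => φ^[i] m) ∧
      φ^[n + 1] m = ∑ i ∈ range (n + 1), a i • φ^[i] m := by
  classical
  have hex : ∃ r, ∃ m : V, m ≠ 0 ∧ ¬LinearIndependent K (fun i : Fin (r + 1) => φ^[i] m) := by
    obtain ⟨x, hx⟩ := exists_ne (0 : V)
    exact ⟨Module.finrank K V, x, hx, fun h => by simpa using h.fintype_card_le_finrank⟩
  obtain ⟨m, hm, hdep⟩ := Nat.find_spec hex
  have hmin : ∀ r < Nat.find hex, ∀ m : V, m ≠ 0 →
      LinearIndependent K (fun i : Fin (r + 1) => φ^[i] m) := fun r hr m hm =>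
    not_not.1 fun h => Nat.find_min hex hr ⟨m, hm, h⟩
  rcases hr : Nat.find hex with _ | n
  · rw [hr] at hdep
    exact (hdep ((linearIndependent_unique_iff (ι := Fin 1)).2 (by simpa using hm))).elim
  rw [hr] at hdep hmin
  have hli := hmin n n.lt_succ_self m hm
  have hspan : φ^[n + 1] m ∈ span K (Set.range fun i : Fin (n + 1) => φ^[i] m) :=
    not_not.1 fun h => hdep ((linearIndependent_iterate_succ_iff _ m _).2 ⟨hli, h⟩)
  obtain ⟨a, ha⟩ := (mem_span_range_iff_exists_fun K).1 hspan
  set a' : ℕ → K := fun i => if h : i < n + 1 then a ⟨i, h⟩ else 0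
  have hrel : φ^[n + 1] m = ∑ i ∈ range (n + 1), a' i • φ^[i] m := by
    rw [← ha, ← Fin.sum_univ_eq_sum_range (fun i => a' i • φ^[i] m)]
    simp [a', Fin.is_le]
  refine ⟨m, n, a', fun h0 => ?_, hli, hrel⟩
  -- with no constant term, the relation for `m` is a shorter one for `φ m`
  have hshort : φ^[n] (φ m) ∈ span K (Set.range fun i : Fin n => φ^[i] (φ m)) := by
    rw [← iterate_succ_apply, hrel, sum_range_succ', h0, zero_smul, add_zero]
    exact sum_mem fun i hi => smul_mem _ _
      (subset_span ⟨⟨i, mem_range.1 hi⟩, (iterate_succ_apply _ _ _).symm⟩)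
  have hφm : φ m ≠ 0 := (map_ne_zero_iff φ hφ).2 hm
  exact ((linearIndependent_iterate_succ_iff _ _ _).1 (hmin n n.lt_succ_self _ hφm)).2 hshort

theorem LinearMap.injective_of_surjective_of_finiteDimensional [FiniteDimensional K V]
    (φ : V →ₛₗ[σ] V) (hφ : Surjective φ) : Injective φ := by
  set b := Module.finBasis K V
  have hspan : ⊤ ≤ span K (Set.range fun i => φ (b i)) := by
    rintro x -
    obtain ⟨y, rfl⟩ := hφ x
    rw [← b.sum_repr y, map_sum]
    exact sum_mem fun i _ => by
      rw [LinearMap.map_smulₛₗ]; exact smul_mem _ _ (subset_span ⟨i, rfl⟩)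
  have hli : LinearIndependent K fun i => φ (b i) :=
    linearIndependent_of_top_le_span_of_card_eq_finrank hspan (by simp)
  refine (injective_iff_map_eq_zero φ).2 fun x hx => b.forall_coord_eq_zero_iff.1 fun i => ?_
  have hsum : ∑ i, σ (b.repr x i) • φ (b i) = 0 := by
    simp only [← LinearMap.map_smulₛₗ, ← map_sum, b.sum_repr, hx]
  exact σ.injective ((Fintype.linearIndependent_iff.1 hli _ hsum i).trans (map_zero σ).symm)

theorem exists_ne_zero_isFixedPt_of_injective [IsSepClosed K] [FiniteDimensional K V]
    [Nontrivial V] (hq : 1 < q) (hqK : (q : K) = 0) (φ : V →ₛₗ[σ] V) (hσ : ∀ x, σ x = x ^ q)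
    (hφ : Injective φ) : ∃ v ≠ 0, φ v = v := by
  obtain ⟨m, n, a, ha0, hli, hrel⟩ := exists_iterate_eq_sum_of_injective φ hφ
  obtain ⟨t, ht0, ht⟩ := IsSepClosed.exists_ne_eval_eq_self_of_derivative_eq_zero
    (derivative_fixedCoeffPoly a hqK n)
    (by rw [natDegree_fixedCoeffPoly hq ha0]; exact Nat.one_lt_pow n.succ_ne_zero hq) 0
  refine ⟨_, fun h => ?_, isFixedPt_sum_fixedCoeffPoly φ hσ hrel ht⟩
  rw [← Fin.sum_univ_eq_sum_range (fun i => (fixedCoeffPoly q a i).eval t • φ^[i] m)] at h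
  have := Fintype.linearIndependent_iff.1 hli _ h 0
  simp [fixedCoeffPoly, ha0, ht0] at this

theorem linearIndependent_of_isFixedPt {F : Type*} [Field F] [Fintype F] [Algebra F K]
    [Module F V] [IsScalarTower F K V] (φ : V →ₛₗ[σ] V)
    (hσ : ∀ x, σ x = x ^ Fintype.card F) {ι : Type*} {v : ι → V} (hv : ∀ i, φ (v i) = v i)
    (hli : LinearIndependent F v) : LinearIndependent K v := by
  classical
  rw [linearIndependent_iff']
  intro s
  induction s using strongInduction with
  | H s ih =>
  intro g hg i hi
  by_contra hgi
  set g' : ι → K := fun j => (g i)⁻¹ * g j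
  have hg' : ∑ j ∈ s, g' j • v j = 0 := by
    simp only [g', mul_smul, ← smul_sum, hg, smul_zero]
  -- applying `φ` and subtracting gives a relation supported on `s.erase i`
  have hfrob : ∑ j ∈ s.erase i, (g' j ^ Fintype.card F - g' j) • v j = 0 := by
    have hφ := congrArg φ hg'
    simp only [map_sum, LinearMap.map_smulₛₗ, hσ, hv, map_zero] at hφ
    rw [sum_erase _ (by simp [g', hgi])]
    simp only [sub_smul, sum_sub_distrib, hφ, hg', sub_zero]
  have hfix : ∀ j ∈ s, g' j ^ Fintype.card F = g' j := by
    intro j hj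
    rcases eq_or_ne j i with rfl | hji
    · simp [g', hgi]
    · exact sub_eq_zero.1 (ih _ (erase_ssubset hi) _ hfrob j (mem_erase.2 ⟨hji, hj⟩))
  choose! c hc using fun j hj => FiniteField.mem_range_algebraMap_of_pow_card_eq_self (hfix j hj)
  have hc0 := linearIndependent_iff'.1 hli s c
    (by rw [← hg']; exact sum_congr rfl fun j hj => by rw [← hc j hj, algebraMap_smul]) i hi
  have := hc i hi
  simp [hc0, g', hgi] at this

theorem exists_mem_span_fixedPoints_sub_eq [IsSepClosed K] (hq : 1 < q) (hqK : (q : K) = 0)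
    (φ : V →ₛₗ[σ] V) (hσ : ∀ x, σ x = x ^ q) {x : V} (hx : x ∈ span K (fixedPoints φ)) :
    ∃ y ∈ span K (fixedPoints φ), φ y - y = x := by
  induction hx using closure_induction with
  | zero => exact ⟨0, zero_mem _, by simp⟩
  | add x x' _ _ hx hx' =>
    obtain ⟨y, hy, rfl⟩ := hx
    obtain ⟨y', hy', rfl⟩ := hx'
    exact ⟨y + y', add_mem hy hy', by rw [map_add]; abel⟩
  | smul_mem c x hx =>
    -- Artin–Schreier: `d ^ q - d = c` is solvable
    obtain ⟨d, hd⟩ := IsSepClosed.exists_root_C_mul_X_pow_add_C_mul_X_add_C 1 (-1) (-c) hqK hq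
      (neg_ne_zero.2 one_ne_zero)
    refine ⟨d • x, smul_mem _ _ (subset_span hx), ?_⟩
    rw [LinearMap.map_smulₛₗ, hσ, hx.eq, ← sub_smul]
    congr 1
    linear_combination hd

theorem span_fixedPoints_eq_top [IsSepClosed K] [FiniteDimensional K V] (hq : 1 < q)
    (hqK : (q : K) = 0) (φ : V →ₛₗ[σ] V) (hσ : ∀ x, σ x = x ^ q) (hφ : Surjective φ) :
    span K (fixedPoints φ) = ⊤ := by
  set N := span K (fixedPoints φ)
  by_contra hN
  have hNφ : N ≤ N.comap φ :=
    span_le.2 fun x hx => mem_comap.2 (by rw [hx.eq]; exact subset_span hx)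
  have : Nontrivial (V ⧸ N) := Submodule.Quotient.nontrivial_iff.2 hN
  set φN := N.mapQ N φ hNφ
  have hφN : Surjective φN := by
    intro y
    obtain ⟨x, rfl⟩ := N.mkQ_surjective y
    obtain ⟨z, rfl⟩ := hφ x
    exact ⟨N.mkQ z, rfl⟩
  obtain ⟨w, hw0, hw⟩ := exists_ne_zero_isFixedPt_of_injective hq hqK φN hσ
    (φN.injective_of_surjective_of_finiteDimensional hφN)
  obtain ⟨x, rfl⟩ := N.mkQ_surjective w
  obtain ⟨y, hy, hxy⟩ :=
    exists_mem_span_fixedPoints_sub_eq hq hqK φ hσ ((Submodule.Quotient.eq N).1 hw)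
  have hfix : x - y ∈ N := subset_span (show φ (x - y) = x - y by
    rw [map_sub, sub_eq_sub_iff_sub_eq_sub]; exact hxy.symm)
  exact hw0 ((Submodule.Quotient.mk_eq_zero N).2 (by simpa using add_mem hfix hy))

end Semilinear

theorem lang_isomorphism_of_semilinear_general
    {Fq Fs : Type*} [Field Fq] [Fintype Fq] [Field Fs] [Algebra Fq Fs] [IsSepClosed Fs]
    {q : ℕ} (hcard : Fintype.card Fq = q)
    {σ : Fs →+* Fs} (hσ : ∀ x, σ x = x ^ q)
    {M : Type*} [AddCommGroup M] [Module Fs M] [FiniteDimensional Fs M]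
    [Module Fq M] [IsScalarTower Fq Fs M]
    (ψ : M →ₛₗ[σ] M) (hψ : Function.Bijective ψ)
    -- `K` is the `F_q`-subspace of `ψ`-fixed points `M^ψ`
    (K : Submodule Fq M) (hK : ∀ m : M, m ∈ K ↔ ψ m = m)
    -- `f` is the multiplication map `M^ψ ⊗_{F_q} F^s → M`, `m ⊗ c ↦ c • m`
    (f : (↥K) ⊗[Fq] Fs →ₗ[Fq] M)
    (hf : ∀ (m : ↥K) (c : Fs), f (m ⊗ₜ c) = c • (m : M)) :
    Function.Bijective f := by
  classical
  subst hcard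
  have hqFs : (Fintype.card Fq : Fs) = 0 := by
    rw [← map_natCast (algebraMap Fq Fs), FiniteField.cast_card_eq_zero, map_zero]
  set b := Module.Basis.ofVectorSpace Fq K
  have hli : LinearIndependent Fs fun i => (b i : M) :=
    linearIndependent_of_isFixedPt ψ hσ (fun i => (hK _).1 (b i).2)
      (b.linearIndependent.map' K.subtype K.ker_subtype)
  have hspan : ⊤ ≤ Submodule.span Fs (Set.range fun i => (b i : M)) := by
    rw [← span_fixedPoints_eq_top Fintype.one_lt_card hqFs ψ hσ hψ.2, Submodule.span_le]
    intro x hx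
    have hxb := Submodule.mem_map_of_mem (f := K.subtype) (b.mem_span ⟨x, (hK x).2 hx⟩)
    rw [Submodule.map_span, ← Set.range_comp] at hxb
    exact Submodule.span_le_restrictScalars Fq Fs _ hxb
  set B := Module.Basis.mk hli hspan
  set e := TensorProduct.equivFinsuppOfBasisLeft b (N := Fs)
  have hfe : ⇑f = B.repr.symm ∘ e := by
    funext x
    obtain ⟨g, rfl⟩ := e.symm.surjective x
    simp [e, B, map_finsuppSum, hf, Finsupp.linearCombination_apply]
  rw [hfe]
  exact B.repr.symm.bijective.comp e.bijective

theorem lang_isomorphism_of_semilinear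
    {Fq Fs : Type*} [Field Fq] [Fintype Fq] [Field Fs] [Algebra Fq Fs] [IsSepClosed Fs]
    {q : ℕ} (hcard : Fintype.card Fq = q) (hfix : ∀ c : Fq, c ^ q = c)
    {σ : Fs →+* Fs} (hσ : ∀ x, σ x = x ^ q)
    {M : Type*} [AddCommGroup M] [Module Fs M] [FiniteDimensional Fs M]
    [Module Fq M] [IsScalarTower Fq Fs M]
    (ψ : M →ₛₗ[σ] M) (hψ : Function.Bijective ψ)
    -- `K` is the `F_q`-subspace of `ψ`-fixed points `M^ψ`
    (K : Submodule Fq M) (hK : ∀ m : M, m ∈ K ↔ ψ m = m)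
    -- `f` is the multiplication map `M^ψ ⊗_{F_q} F^s → M`, `m ⊗ c ↦ c • m`
    (f : (↥K) ⊗[Fq] Fs →ₗ[Fq] M)
    (hf : ∀ (m : ↥K) (c : Fs), f (m ⊗ₜ c) = c • (m : M)) :
    Function.Bijective f :=
  lang_isomorphism_of_semilinear_general hcard hσ ψ hψ K hK f hf
end

section
/- Let 0 → D' → D → D'' → 0 be a short exact sequence of isocrystals over a field F. If the slope of every nonzero subisocrystal of D' is strictly greater than 0 (i.e. μ(D') > 0 in the sense that D' has all slopes positive, given via a lattice L ⊆ D' with ⟨φ^h L⟩ ⊆ 𝔪L for some h > 0), and D'' is the unit isocrystal 𝟙, then the sequence splits. Concretely: if D' = (D', φ') admits an A(F)-lattice L with φ'^h(σ^{h*}L) ⊆ 𝔪L for some h > 0, then id − φ' is surjective on D', and hence Ext^1(𝟙, D') = 0. -/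
open scoped TensorProduct

/-!
Fix a basis of `D` over `B(F)` and filter `D` by the `π`-adic order of the coordinates. The
filtration is separated and complete, a `τ`-semilinear map shifts it by a bounded amount, and a
finitely generated lattice lies in one of its steps. The slope condition `φ^h L ⊆ π L` therefore
puts `φ^N y` about `N / h` steps deep, so the geometric series `∑ φ^n y` converges; its sum `x`
satisfies `x - φ x = y` because `φ^N y → 0`.
-/

section

open HahnSeries Filter

variable {R : Type*} [CommRing R]

namespace LaurentSeries

theorem exists_orderTop_sub_ge_of_cauchy {f : ℕ → LaurentSeries R} {c : ℕ → ℤ}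
    (hc : Monotone c) (hc' : Tendsto c atTop atTop)
    (hf : ∀ N, (c N : WithTop ℤ) ≤ (f (N + 1) - f N).orderTop) :
    ∃ g : LaurentSeries R, ∀ N, (c N : WithTop ℤ) ≤ (g - f N).orderTop := by
  have hfar : ∀ {N M}, N ≤ M → (c N : WithTop ℤ) ≤ (f M - f N).orderTop := by
    intro N M hNM
    induction M, hNM using Nat.le_induction with
    | base => simp
    | succ M hNM ih =>
      rw [← sub_add_sub_cancel (f (M + 1)) (f M)]
      exact (le_min ((WithTop.coe_le_coe.2 (hc hNM)).trans (hf M)) ih).trans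
        min_orderTop_le_orderTop_add
  have hstab : ∀ {N M n}, N ≤ M → n < c N → (f M).coeff n = (f N).coeff n := fun hNM hn =>
    sub_eq_zero.1 <| by
      rw [← coeff_sub]
      exact coeff_eq_zero_of_lt_orderTop ((WithTop.coe_lt_coe.2 hn).trans_le (hfar hNM))
  -- the `n`-th coefficient of the limit is that of any `f N` with `n < c N`
  choose K hK using fun n : ℤ => (hc'.eventually_gt_atTop n).exists
  have hsupp : ∀ n < min (f 0).order (c 0), (f (K n)).coeff n = 0 := fun n hn => by
    rw [hstab (Nat.zero_le _) (hn.trans_le (min_le_right _ _))]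
    exact coeff_eq_zero_of_lt_order (hn.trans_le (min_le_left _ _))
  refine ⟨⟨fun n => (f (K n)).coeff n, (BddBelow.isWF ⟨min (f 0).order (c 0), ?_⟩).isPWO⟩,
    fun N => le_orderTop_iff_forall.2 fun n hn => ?_⟩
  · exact fun n hn => not_lt.1 fun h => hn (hsupp n h)
  · rw [coeff_sub, ← hstab (le_max_left (K n) N) (hK n), hstab (le_max_right (K n) N)
      (WithTop.coe_lt_coe.1 hn), sub_self]

theorem coe_order_le_orderTop (x : LaurentSeries R) : (x.order : WithTop ℤ) ≤ x.orderTop := by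
  rcases eq_or_ne x 0 with rfl | hx
  · simp
  · rw [order_eq_orderTop_of_ne_zero hx]

theorem orderTop_coe_nonneg (p : PowerSeries R) : 0 ≤ (p : LaurentSeries R).orderTop :=
  le_orderTop_iff_forall.2 fun n hn => by
    rw [PowerSeries.coeff_coe, if_pos (WithTop.coe_lt_coe.1 hn)]

variable {σ₀ : R →+* R} {σ : LaurentSeries R →+* LaurentSeries R}

theorem orderTop_le_orderTop_of_coeff_map (hσ : ∀ x n, (σ x).coeff n = σ₀ (x.coeff n))
    (x : LaurentSeries R) : x.orderTop ≤ (σ x).orderTop :=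
  le_orderTop_iff_forall.2 fun n hn => by rw [hσ, coeff_eq_zero_of_lt_orderTop hn, map_zero]

theorem map_single_one_of_coeff_map (hσ : ∀ x n, (σ x).coeff n = σ₀ (x.coeff n)) (k : ℤ) :
    σ (single k (1 : R)) = single k 1 := by
  ext n
  rw [hσ, coeff_single]
  split_ifs <;> simp

end LaurentSeries

variable {D : Type*} [AddCommGroup D] [Module (LaurentSeries R) D]
  {ι : Type*} (b : Module.Basis ι (LaurentSeries R) D)

namespace Module.Basis

def laurentFiltration (t : ℤ) : AddSubgroup D where
  carrier := {z | ∀ j, (t : WithTop ℤ) ≤ (b.repr z j).orderTop}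
  add_mem' {x y} hx hy j := by
    simpa using (le_min (hx j) (hy j)).trans min_orderTop_le_orderTop_add
  zero_mem' := by simp
  neg_mem' {x} hx j := by simpa [orderTop_neg] using hx j

variable {b}

theorem laurentFiltration_antitone : Antitone b.laurentFiltration :=
  fun _ _ hst _ hz j => (WithTop.coe_le_coe.2 hst).trans (hz j)

theorem smul_mem_laurentFiltration {c : LaurentSeries R} {s t : ℤ} {z : D}
    (hc : (s : WithTop ℤ) ≤ c.orderTop) (hz : z ∈ b.laurentFiltration t) :
    c • z ∈ b.laurentFiltration (s + t) := fun j => by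
  rw [map_smul, Finsupp.smul_apply, smul_eq_mul, WithTop.coe_add]
  exact (add_le_add hc (hz j)).trans orderTop_add_le_mul

theorem single_smul_mem_laurentFiltration {s t : ℤ} {z : D} (hz : z ∈ b.laurentFiltration t) :
    single s (1 : R) • z ∈ b.laurentFiltration (s + t) :=
  smul_mem_laurentFiltration orderTop_single_le hz

theorem exists_mem_laurentFiltration [Finite ι] (z : D) : ∃ t, z ∈ b.laurentFiltration t := by
  obtain ⟨t, ht⟩ := Finite.exists_ge fun j => (b.repr z j).order
  exact ⟨t, fun j =>
    (WithTop.coe_le_coe.2 (ht j)).trans (LaurentSeries.coe_order_le_orderTop _)⟩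

theorem eq_zero_of_forall_mem_laurentFiltration {z : D} (hz : ∀ t, z ∈ b.laurentFiltration t) :
    z = 0 := by
  refine b.repr.map_eq_zero_iff.1 (Finsupp.ext fun j => ?_)
  ext n
  exact coeff_eq_zero_of_lt_orderTop ((WithTop.coe_lt_coe.2 (lt_add_one n)).trans_le (hz _ j))

theorem exists_sub_mem_laurentFiltration_of_cauchy [Finite ι] {s : ℕ → D} {c : ℕ → ℤ}
    (hc : Monotone c) (hc' : Tendsto c atTop atTop)
    (hs : ∀ N, s (N + 1) - s N ∈ b.laurentFiltration (c N)) :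
    ∃ x, ∀ N, x - s N ∈ b.laurentFiltration (c N) := by
  choose g hg using fun j => LaurentSeries.exists_orderTop_sub_ge_of_cauchy hc hc'
    (f := fun N => b.repr (s N) j) fun N => by simpa using hs N j
  refine ⟨b.equivFun.symm g, fun N j => ?_⟩
  have hrepr : b.repr (b.equivFun.symm g) j = g j := by
    rw [← b.equivFun_apply, LinearEquiv.apply_symm_apply]
  simpa [hrepr] using hg j N

theorem exists_map_mem_laurentFiltration [Fintype ι] {σ : LaurentSeries R →+* LaurentSeries R}
    (hσ : ∀ x, x.orderTop ≤ (σ x).orderTop) (φ : D →ₛₗ[σ] D) :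
    ∃ m, ∀ t, ∀ z ∈ b.laurentFiltration t, φ z ∈ b.laurentFiltration (t + m) := by
  choose T hT using fun j => exists_mem_laurentFiltration (b := b) (φ (b j))
  obtain ⟨m, hm⟩ := Finite.exists_ge T
  refine ⟨m, fun t z hz => ?_⟩
  rw [← b.sum_repr z, map_sum]
  refine AddSubgroup.sum_mem _ fun j _ => ?_
  rw [φ.map_smulₛₗ]
  exact laurentFiltration_antitone (show t + m ≤ t + T j by linarith [hm j])
    (smul_mem_laurentFiltration (s := t) (t := T j) ((hz j).trans (hσ _)) (hT j))

theorem exists_sub_eq_of_iterate_mem_laurentFiltration [Finite ι] (φ : D →+ D) {m : ℤ}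
    (hφ : ∀ t, ∀ z ∈ b.laurentFiltration t, φ z ∈ b.laurentFiltration (t + m))
    {y : D} {c : ℕ → ℤ} (hc : Monotone c) (hc' : Tendsto c atTop atTop)
    (hy : ∀ N, φ^[N] y ∈ b.laurentFiltration (c N)) : ∃ x, x - φ x = y := by
  set s : ℕ → D := fun N => ∑ n ∈ Finset.range N, φ^[n] y
  obtain ⟨x, hx⟩ := exists_sub_mem_laurentFiltration_of_cauchy hc hc' (s := s)
    fun N => by simpa [s, Finset.sum_range_succ] using hy N
  have htelescope : ∀ N, φ (s N) - s N = φ^[N] y - y := fun N => by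
    simp only [s, map_sum, ← Finset.sum_sub_distrib, ← Function.iterate_succ_apply' φ]
    exact Finset.sum_range_sub (fun n => φ^[n] y) N
  refine ⟨x, sub_eq_zero.1 (eq_zero_of_forall_mem_laurentFiltration (b := b) fun t => ?_)⟩
  obtain ⟨N, hN⟩ := (hc'.eventually_ge_atTop (t - min m 0)).exists
  have hle : t ≤ c N := by linarith [min_le_right m 0]
  have hrewrite : x - φ x - y = (x - s N) - φ (x - s N) - φ^[N] y := by
    rw [map_sub, ← sub_add_cancel (φ^[N] y) y, ← htelescope]
    abel
  rw [hrewrite]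
  refine sub_mem (sub_mem (laurentFiltration_antitone hle (hx N)) ?_)
    (laurentFiltration_antitone hle (hy N))
  exact laurentFiltration_antitone (by linarith [min_le_left m 0]) (hφ _ _ (hx N))

end Module.Basis

section Lattice

variable [Module (PowerSeries R) D] [IsScalarTower (PowerSeries R) (LaurentSeries R) D]
  {L : Submodule (PowerSeries R) D}

theorem Submodule.exists_eq_single_smul_of_span_eq_top
    (hL : Submodule.span (LaurentSeries R) (L : Set D) = ⊤) (y : D) :
    ∃ K : ℕ, ∃ l ∈ L, y = single (-K : ℤ) (1 : R) • l := by
  obtain ⟨l, hl, ⟨_, K, rfl⟩, rfl⟩ :=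
    (IsLocalization.mem_span_iff (M := Submonoid.powers (PowerSeries.X : PowerSeries R))).1
      (hL ▸ Submodule.mem_top : y ∈ Submodule.span (LaurentSeries R) (L : Set D))
  refine ⟨K, l, by rwa [Submodule.span_eq] at hl, congrArg (· • l) ?_⟩
  rw [IsLocalization.mk'_eq_iff_eq_mul, map_one, LaurentSeries.coe_algebraMap,
    ofPowerSeries_X_pow, single_mul_single, neg_add_cancel, mul_one, single_zero_one]

theorem Module.Basis.exists_forall_mem_laurentFiltration_of_fg [Finite ι] (hL : L.FG) :
    ∃ t, ∀ z ∈ L, z ∈ b.laurentFiltration t := by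
  obtain ⟨S, rfl⟩ := hL
  choose T hT using fun s : S => b.exists_mem_laurentFiltration (s : D)
  obtain ⟨t, ht⟩ := Finite.exists_ge T
  refine ⟨t, fun z hz => Submodule.span_induction
    (fun s hs => b.laurentFiltration_antitone (ht ⟨s, hs⟩) (hT ⟨s, hs⟩)) (zero_mem _)
    (fun _ _ _ _ => add_mem) (fun p z _ hz => ?_) hz⟩
  rw [← algebraMap_smul (LaurentSeries R) p z, ← zero_add t]
  exact b.smul_mem_laurentFiltration (LaurentSeries.orderTop_coe_nonneg p) hz

end Lattice

namespace LinearMap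

variable {σ : LaurentSeries R →+* LaurentSeries R} (φ : D →ₛₗ[σ] D)

theorem iterate_single_smul (hσ : ∀ k, σ (HahnSeries.single k (1 : R)) = HahnSeries.single k 1)
    (N : ℕ) (k : ℤ) (z : D) :
    φ^[N] (HahnSeries.single k (1 : R) • z) = HahnSeries.single k (1 : R) • φ^[N] z :=
  Function.Commute.iterate_left (f := φ) (g := (HahnSeries.single k (1 : R) • ·))
    (fun z => by simp only [φ.map_smulₛₗ, hσ]) N z

variable [Module (PowerSeries R) D] [IsScalarTower (PowerSeries R) (LaurentSeries R) D]
  {L : Submodule (PowerSeries R) D}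

theorem exists_iterate_mul_eq_single_smul
    (hσ : ∀ k, σ (HahnSeries.single k (1 : R)) = HahnSeries.single k 1) {h : ℕ}
    (hslope : Submodule.span (PowerSeries R) ((⇑φ)^[h] '' (L : Set D)) ≤
      L.map (DistribSMul.toLinearMap (PowerSeries R) D (PowerSeries.X : PowerSeries R))) (m : ℕ) :
    ∀ l ∈ L, ∃ l' ∈ L, φ^[h * m] l = HahnSeries.single (m : ℤ) (1 : R) • l' := by
  induction m with
  | zero => exact fun l hl => ⟨l, hl, by simp⟩
  | succ m ih =>
    intro l hl
    obtain ⟨l₁, hl₁, he₁⟩ := hslope (Submodule.subset_span ⟨l, hl, rfl⟩)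
    obtain ⟨l₂, hl₂, he₂⟩ := ih l₁ hl₁
    refine ⟨l₂, hl₂, ?_⟩
    rw [Nat.mul_succ, Function.iterate_add_apply, ← he₁, DistribSMul.toLinearMap_apply,
      ← algebraMap_smul (LaurentSeries R), LaurentSeries.coe_algebraMap, ofPowerSeries_X,
      iterate_single_smul φ hσ, he₂, smul_smul, single_mul_single, one_mul, Nat.cast_succ,
      add_comm]

end LinearMap

section PositiveSlopes

variable [Module (PowerSeries R) D] [IsScalarTower (PowerSeries R) (LaurentSeries R) D]
  {L : Submodule (PowerSeries R) D} {σ : LaurentSeries R →+* LaurentSeries R}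
  (φ : D →ₛₗ[σ] D) {h : ℕ}

theorem Module.Basis.exists_iterate_mem_laurentFiltration [Finite ι]
    (hσ : ∀ k, σ (single k (1 : R)) = single k 1) {m : ℤ}
    (hφ : ∀ t, ∀ z ∈ b.laurentFiltration t, φ z ∈ b.laurentFiltration (t + m))
    (hLfg : L.FG)
    (hLspan : Submodule.span (LaurentSeries R) (L : Set D) = ⊤) (hh : 0 < h)
    (hslope : Submodule.span (PowerSeries R) ((⇑φ)^[h] '' (L : Set D)) ≤
      L.map (DistribSMul.toLinearMap (PowerSeries R) D (PowerSeries.X : PowerSeries R)))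
    (y : D) : ∃ T, ∀ N, φ^[N] y ∈ b.laurentFiltration (T + (N / h : ℕ)) := by
  obtain ⟨t, ht⟩ := b.exists_forall_mem_laurentFiltration_of_fg hLfg
  have hiter : ∀ r : ℕ, ∀ l ∈ L, φ^[r] l ∈ b.laurentFiltration (t + r * m) := by
    intro r
    induction r with
    | zero => simpa using ht
    | succ r ih =>
      intro l hl
      rw [Function.iterate_succ_apply']
      convert hφ _ _ (ih l hl) using 2
      push_cast
      ring
  obtain ⟨K, l, hl, rfl⟩ := Submodule.exists_eq_single_smul_of_span_eq_top hLspan y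
  refine ⟨-K + (t - h * |m|), fun N => ?_⟩
  obtain ⟨l', hl', he⟩ := φ.exists_iterate_mul_eq_single_smul hσ hslope (N / h) l hl
  have hsplit : φ^[N] l = single ((N / h : ℕ) : ℤ) (1 : R) • φ^[N % h] l' := by
    conv_lhs => rw [← Nat.mod_add_div N h]
    rw [Function.iterate_add_apply, he, φ.iterate_single_smul hσ]
  have hrem : t - h * |m| ≤ t + (N % h : ℕ) * m := by
    have : ((N % h : ℕ) : ℤ) < h := by exact_mod_cast Nat.mod_lt N hh
    nlinarith [neg_abs_le m, abs_nonneg m]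
  rw [φ.iterate_single_smul hσ, hsplit, add_assoc, add_comm (t - _)]
  exact b.single_smul_mem_laurentFiltration (b.single_smul_mem_laurentFiltration
    (b.laurentFiltration_antitone hrem (hiter _ l' hl')))

theorem LinearMap.surjective_id_sub_of_slope_pos [Module.Free (LaurentSeries R) D]
    [Module.Finite (LaurentSeries R) D] {σ₀ : R →+* R}
    (hσ : ∀ x n, (σ x).coeff n = σ₀ (x.coeff n))
    (hLfg : L.FG) (hLspan : Submodule.span (LaurentSeries R) (L : Set D) = ⊤) (hh : 0 < h)
    (hslope : Submodule.span (PowerSeries R) ((⇑φ)^[h] '' (L : Set D)) ≤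
      L.map (DistribSMul.toLinearMap (PowerSeries R) D (PowerSeries.X : PowerSeries R))) :
    Function.Surjective (fun x : D => x - φ x) := by
  let b := Module.Free.chooseBasis (LaurentSeries R) D
  obtain ⟨m, hm⟩ :=
    b.exists_map_mem_laurentFiltration (LaurentSeries.orderTop_le_orderTop_of_coeff_map hσ) φ
  intro y
  obtain ⟨T, hT⟩ := b.exists_iterate_mem_laurentFiltration φ
    (LaurentSeries.map_single_one_of_coeff_map hσ) hm hLfg hLspan hh hslope y
  refine b.exists_sub_eq_of_iterate_mem_laurentFiltration φ.toAddMonoidHom hm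
    (fun N M hNM => ?_) ?_ hT
  · exact add_le_add_right (Nat.cast_le.2 (Nat.div_le_div_right hNM)) T
  · exact tendsto_atTop_add_const_left _ T
      (tendsto_natCast_atTop_atTop.comp (Nat.tendsto_div_const_atTop hh.ne'))

end PositiveSlopes

end

theorem isocrystal_positive_slopes_id_sub_phi_surjective_general
    {Fq kk F : Type*} [Field Fq]
    [Field kk] [Algebra Fq kk]
    [Field F] [Algebra Fq F]
    -- the coefficient-wise Frobenius `τ₀ = id_k ⊗ Frob_q` on `k ⊗_{F_q} F` …
    (τ₀ : kk ⊗[Fq] F →+* kk ⊗[Fq] F)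
    -- … extended `π`-adically continuously to `B(F) = (k ⊗ F)((π))`
    (τB : LaurentSeries (kk ⊗[Fq] F) →+* LaurentSeries (kk ⊗[Fq] F))
    (hτB : ∀ (x : LaurentSeries (kk ⊗[Fq] F)) (n : ℤ), (τB x).coeff n = τ₀ (x.coeff n))
    -- `(D, φ)` is an isocrystal over `F`: `D` finite free over `B(F)`, `φ` a `τ`-semilinear
    -- bijection onto a spanning set (we record it as a `τB`-semilinear map)
    {D : Type*} [AddCommGroup D] [Module (LaurentSeries (kk ⊗[Fq] F)) D]
    [Module (PowerSeries (kk ⊗[Fq] F)) D]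
    [IsScalarTower (PowerSeries (kk ⊗[Fq] F)) (LaurentSeries (kk ⊗[Fq] F)) D]
    [Module.Free (LaurentSeries (kk ⊗[Fq] F)) D]
    [Module.Finite (LaurentSeries (kk ⊗[Fq] F)) D]
    (φ : D →ₛₗ[τB] D)
    -- an `A(F)`-lattice `L` in `D` with `⟨φ^h L⟩ ⊆ 𝔪·L` for some `h > 0`
    (L : Submodule (PowerSeries (kk ⊗[Fq] F)) D)
    (hLfg : L.FG)
    (hLspan : Submodule.span (LaurentSeries (kk ⊗[Fq] F)) (L : Set D) = ⊤)
    (h : ℕ) (hh : 0 < h)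
    (hslope : Submodule.span (PowerSeries (kk ⊗[Fq] F)) ((⇑φ)^[h] '' (L : Set D)) ≤
      Submodule.map
        (DistribMulAction.toLinearMap (PowerSeries (kk ⊗[Fq] F)) D
          (PowerSeries.X : PowerSeries (kk ⊗[Fq] F))) L) :
    Function.Surjective (fun x : D => x - φ x) :=
  φ.surjective_id_sub_of_slope_pos hτB hLfg hLspan hh hslope

theorem isocrystal_positive_slopes_id_sub_phi_surjective
    {Fq kk F : Type*} [Field Fq] [Fintype Fq]
    [Field kk] [Algebra Fq kk] [FiniteDimensional Fq kk]
    [Field F] [Algebra Fq F]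
    {p q e : ℕ} (hp : p.Prime) [CharP F p] (he : 0 < e) (hq : q = p ^ e)
    (hcard : Fintype.card Fq = q)
    -- the coefficient-wise Frobenius `τ₀ = id_k ⊗ Frob_q` on `k ⊗_{F_q} F` …
    (τ₀ : kk ⊗[Fq] F →+* kk ⊗[Fq] F)
    (hτ₀ : ∀ (a : kk) (b : F), τ₀ (a ⊗ₜ b) = a ⊗ₜ (b ^ q))
    -- … extended `π`-adically continuously to `B(F) = (k ⊗ F)((π))`
    (τB : LaurentSeries (kk ⊗[Fq] F) →+* LaurentSeries (kk ⊗[Fq] F))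
    (hτB : ∀ (x : LaurentSeries (kk ⊗[Fq] F)) (n : ℤ), (τB x).coeff n = τ₀ (x.coeff n))
    -- `(D, φ)` is an isocrystal over `F`: `D` finite free over `B(F)`, `φ` a `τ`-semilinear
    -- bijection onto a spanning set (we record it as a `τB`-semilinear map)
    {D : Type*} [AddCommGroup D] [Module (LaurentSeries (kk ⊗[Fq] F)) D]
    [Module (PowerSeries (kk ⊗[Fq] F)) D]
    [IsScalarTower (PowerSeries (kk ⊗[Fq] F)) (LaurentSeries (kk ⊗[Fq] F)) D]
    [Module.Free (LaurentSeries (kk ⊗[Fq] F)) D]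
    [Module.Finite (LaurentSeries (kk ⊗[Fq] F)) D]
    (φ : D →ₛₗ[τB] D)
    (hφspan : Submodule.span (LaurentSeries (kk ⊗[Fq] F)) (Set.range φ) = ⊤)
    -- an `A(F)`-lattice `L` in `D` with `⟨φ^h L⟩ ⊆ 𝔪·L` for some `h > 0`
    (L : Submodule (PowerSeries (kk ⊗[Fq] F)) D)
    (hLfg : L.FG)
    (hLspan : Submodule.span (LaurentSeries (kk ⊗[Fq] F)) (L : Set D) = ⊤)
    (h : ℕ) (hh : 0 < h)
    (hslope : Submodule.span (PowerSeries (kk ⊗[Fq] F)) ((⇑φ)^[h] '' (L : Set D)) ≤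
      Submodule.map
        (DistribMulAction.toLinearMap (PowerSeries (kk ⊗[Fq] F)) D
          (PowerSeries.X : PowerSeries (kk ⊗[Fq] F))) L) :
    Function.Surjective (fun x : D => x - φ x) :=
  isocrystal_positive_slopes_id_sub_phi_surjective_general τ₀ τB hτB φ L hLfg hLspan h hh hslope
end

section
/- Let q = p^e ≥ 2 be a prime power, n a power of p, θ transcendental over F_q, and F ⊇ F_q(θ) a field. For every m(t) ∈ F[t] there exist ε(t) ∈ F[t] of degree < n and p(t) ∈ F[t] such that m(t)/(t−θ)^n = ε(t)/(t−θ)^n + p(t) − p(t)^{(1)}/(t−θ)^n, where p(t)^{(1)} denotes the polynomial obtained from p(t) by raising all coefficients to the q-th power. -/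
/-!
Clearing denominators, we need `m = ε + P·D - P^{(1)}` with `D = (t - θ)^n` and `deg ε < n`.
Dividing, `m = r + A·D = r + (A·D - A^{(1)}) + A^{(1)}` with `deg r < n`, so it suffices to treat
`A^{(1)}`, whose degree `deg m - n` is smaller than `deg m`: induct on the degree.
-/

open Polynomial

theorem Polynomial.exists_degree_lt_eq_add_mul_sub_map {R : Type*} [CommRing R] (σ : R →+* R)
    {D : R[X]} (hD : D.Monic) (hD₀ : 0 < D.natDegree) (m : R[X]) :
    ∃ ε P : R[X], ε.degree < D.degree ∧ m = ε + P * D - P.map σ := by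
  obtain _ | _ := subsingleton_or_nontrivial R
  · simp [natDegree_of_subsingleton] at hD₀
  induction hm : m.natDegree using Nat.strong_induction_on generalizing m with
  | _ N ih =>
  by_cases hdeg : m.degree < D.degree
  · exact ⟨m, 0, hdeg, by simp⟩
  set A := m /ₘ D
  have hA : (A.map σ).natDegree < N := by
    have hDm : D.natDegree ≤ m.natDegree := natDegree_le_natDegree (not_lt.mp hdeg)
    calc (A.map σ).natDegree ≤ A.natDegree := natDegree_map_le
      _ = m.natDegree - D.natDegree := natDegree_divByMonic m hD
      _ < N := by omega
  obtain ⟨ε, P, hε, hP⟩ := ih _ hA (A.map σ) rfl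
  refine ⟨m %ₘ D + ε, A + P,
    (degree_add_le _ _).trans_lt (max_lt (degree_modByMonic_lt m hD) hε), ?_⟩
  rw [Polynomial.map_add]
  linear_combination -modByMonic_add_div m D + hP

theorem reduction_modulo_carlitz_twist_general
    {F : Type*} [Field F]
    {n : ℕ} (hnpos : 0 < n)
    (θ : F)
    {σ : F →+* F} :
    ∀ m : Polynomial F, ∃ ε P : Polynomial F, ε.degree < n ∧
      (algebraMap (Polynomial F) (RatFunc F) m) /
          (algebraMap (Polynomial F) (RatFunc F) (Polynomial.X - Polynomial.C θ)) ^ n =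
        (algebraMap (Polynomial F) (RatFunc F) ε) /
            (algebraMap (Polynomial F) (RatFunc F) (Polynomial.X - Polynomial.C θ)) ^ n +
          algebraMap (Polynomial F) (RatFunc F) P -
          (algebraMap (Polynomial F) (RatFunc F) (P.map σ)) /
            (algebraMap (Polynomial F) (RatFunc F) (Polynomial.X - Polynomial.C θ)) ^ n := by
  intro m
  have hD : ((X - C θ) ^ n).Monic := (monic_X_sub_C θ).pow n
  obtain ⟨ε, P, hε, hm⟩ := exists_degree_lt_eq_add_mul_sub_map σ hD (by simpa using hnpos) m
  refine ⟨ε, P, by simpa using hε, ?_⟩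
  have hD₀ : algebraMap F[X] (RatFunc F) (X - C θ) ^ n ≠ 0 :=
    pow_ne_zero n (RatFunc.algebraMap_ne_zero (X_sub_C_ne_zero θ))
  rw [hm, map_sub, map_add, map_mul, map_pow]
  field_simp

theorem reduction_modulo_carlitz_twist
    {Fq F : Type*} [Field Fq] [Fintype Fq] [Field F] [Algebra Fq F]
    {p q e n k : ℕ} (hp : p.Prime) [CharP F p] (he : 0 < e) (hq : q = p ^ e)
    (hcard : Fintype.card Fq = q) (hn : n = p ^ k) (hnpos : 0 < n)
    (θ : F) (hθ : Transcendental Fq θ)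
    {σ : F →+* F} (hσ : ∀ x, σ x = x ^ q) :
    ∀ m : Polynomial F, ∃ ε P : Polynomial F, ε.degree < n ∧
      (algebraMap (Polynomial F) (RatFunc F) m) /
          (algebraMap (Polynomial F) (RatFunc F) (Polynomial.X - Polynomial.C θ)) ^ n =
        (algebraMap (Polynomial F) (RatFunc F) ε) /
            (algebraMap (Polynomial F) (RatFunc F) (Polynomial.X - Polynomial.C θ)) ^ n +
          algebraMap (Polynomial F) (RatFunc F) P -
          (algebraMap (Polynomial F) (RatFunc F) (P.map σ)) /
            (algebraMap (Polynomial F) (RatFunc F) (Polynomial.X - Polynomial.C θ)) ^ n :=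
  reduction_modulo_carlitz_twist_general hnpos θ
end

section
/- Let A = F_q[t], θ = κ(t) transcendental over F_q, F a field containing F_q(θ), and n a positive integer that is a power of the characteristic p. Suppose F contains an element η with η^{q−1} = (−1/θ)^n. Then the extension class ι(η^q) ∈ Ext^1 = F[t,(t−θ)^{-1}]/(id − τ_M)(F[t]) for the A-motive A(−n) = (F[t], (t−θ)^n·1) is nonzero and is killed by t^n: namely −t^n·η^q = η − (t−θ)^n η^q lies in (id − τ_M)(F[t]), while there is no polynomial p(t) ∈ F[t] with η^q = p(t) − (t−θ)^n p(t)^{(1)}. Hence Ext^1_{M_F}(𝟙, A(−n)) has nonzero t^n-torsion. -/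
/-!
Since `n` is a power of the characteristic, `(-1)^n = -1` and `(t - θ)^n = t^n - θ^n`, and the
hypothesis on `η` gives `θ^n η^q = -η`; together these yield
`η - (t - θ)^n η^q = -t^n η^q`. On the other hand, for `P ≠ 0` the term `(t - θ)^n P^{(1)}` has
degree `n + deg P > deg P`, so `P - (t - θ)^n P^{(1)}` has positive degree and is never the
nonzero constant `η^q`.
-/

open Polynomial

theorem pow_mul_pow_eq_neg_of_pow_pred_eq {K : Type*} [Field K] {θ η : K} {n q : ℕ}
    (hθ : θ ≠ 0) (hq : 0 < q) (hn : (-1 : K) ^ n = -1) (hη : η ^ (q - 1) = (-1 / θ) ^ n) :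
    θ ^ n * η ^ q = -η := by
  obtain ⟨r, rfl⟩ := Nat.exists_eq_succ_of_ne_zero hq.ne'
  rw [Nat.succ_sub_one] at hη
  rw [pow_succ', hη, div_pow, hn]
  field_simp

theorem X_sub_C_pow_char_pow_mul_C {R : Type*} [CommRing R] {p : ℕ} [Fact p.Prime] [CharP R p]
    (k : ℕ) (θ b : R) :
    (X - C θ) ^ p ^ k * C b = X ^ p ^ k * C b - C (θ ^ p ^ k * b) := by
  rw [sub_pow_char_pow, C_mul, C_pow]
  ring

theorem natDegree_sub_X_sub_C_pow_mul_map {K : Type*} [Field K] (σ : K →+* K) (θ : K)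
    {n : ℕ} (hn : 0 < n) {P : K[X]} (hP : P ≠ 0) :
    (P - (X - C θ) ^ n * P.map σ).natDegree = n + P.natDegree := by
  have hdeg : ((X - C θ) ^ n * P.map σ).natDegree = n + P.natDegree := by
    rw [natDegree_mul (pow_ne_zero _ (X_sub_C_ne_zero θ))
        ((Polynomial.map_ne_zero_iff σ.injective).2 hP), natDegree_pow, natDegree_X_sub_C, mul_one, natDegree_map_eq_of_injective σ.injective]
  rw [natDegree_sub_eq_right_of_natDegree_lt (by omega), hdeg]

theorem C_ne_sub_X_sub_C_pow_mul_map {K : Type*} [Field K] (σ : K →+* K) (θ : K)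
    {n : ℕ} (hn : 0 < n) {c : K} (hc : c ≠ 0) (P : K[X]) :
    C c ≠ P - (X - C θ) ^ n * P.map σ := by
  intro hP
  rcases eq_or_ne P 0 with rfl | hP0
  · simp [hc] at hP
  · have := natDegree_sub_X_sub_C_pow_mul_map σ θ hn hP0
    rw [← hP, natDegree_C] at this
    omega

theorem carlitz_negative_twist_torsion_class_general
    {Fq F : Type*} [Field Fq] [Fintype Fq] [Field F] [Algebra Fq F]
    {p q n k : ℕ} (hp : p.Prime) [CharP F p]
    (hcard : Fintype.card Fq = q) (hn : n = p ^ k)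
    (θ : F) (hθ : Transcendental Fq θ)
    {σ : F →+* F} (hσ : ∀ x, σ x = x ^ q)
    (η : F) (hη : η ^ (q - 1) = (-1 / θ) ^ n) :
    -- `-t^n · η^q = η - (t-θ)^n · η^q`, so `t^n · ι(η^q) = 0` in `Ext¹`
    (-(Polynomial.X ^ n * Polynomial.C (η ^ q)) =
        Polynomial.C η -
          (Polynomial.X - Polynomial.C θ) ^ n * Polynomial.map σ (Polynomial.C η)) ∧
    -- but `ι(η^q) ≠ 0`: `η^q` is not of the form `P - (t-θ)^n·P^{(1)}`
    (¬ ∃ P : Polynomial F,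
        Polynomial.C (η ^ q) =
          P - (Polynomial.X - Polynomial.C θ) ^ n * Polynomial.map σ P) := by
  have : Fact p.Prime := ⟨hp⟩
  subst hn
  have hq : 1 < q := hcard ▸ Fintype.one_lt_card
  have hθ0 : θ ≠ 0 := fun h => hθ (h ▸ isAlgebraic_zero)
  have hθη : θ ^ p ^ k * η ^ q = -η :=
    pow_mul_pow_eq_neg_of_pow_pred_eq hθ0 (by omega) (neg_one_pow_char_pow F p k) hη
  have hη0 : η ≠ 0 := by
    rintro rfl
    rw [zero_pow (by omega)] at hη
    exact pow_ne_zero _ (div_ne_zero (neg_ne_zero.2 one_ne_zero) hθ0) hη.symm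
  refine ⟨?_, fun ⟨P, hP⟩ => C_ne_sub_X_sub_C_pow_mul_map σ θ (pow_pos hp.pos k)
    (pow_ne_zero q hη0) P hP⟩
  rw [map_C, hσ, X_sub_C_pow_char_pow_mul_C, hθη, C_neg]
  ring

theorem carlitz_negative_twist_torsion_class
    {Fq F : Type*} [Field Fq] [Fintype Fq] [Field F] [Algebra Fq F]
    {p q e n k : ℕ} (hp : p.Prime) [CharP F p] (he : 0 < e) (hq : q = p ^ e)
    (hcard : Fintype.card Fq = q) (hn : n = p ^ k)
    (θ : F) (hθ : Transcendental Fq θ)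
    {σ : F →+* F} (hσ : ∀ x, σ x = x ^ q)
    (η : F) (hη : η ^ (q - 1) = (-1 / θ) ^ n) :
    -- `-t^n · η^q = η - (t-θ)^n · η^q`, so `t^n · ι(η^q) = 0` in `Ext¹`
    (-(Polynomial.X ^ n * Polynomial.C (η ^ q)) =
        Polynomial.C η -
          (Polynomial.X - Polynomial.C θ) ^ n * Polynomial.map σ (Polynomial.C η)) ∧
    -- but `ι(η^q) ≠ 0`: `η^q` is not of the form `P - (t-θ)^n·P^{(1)}`
    (¬ ∃ P : Polynomial F,
        Polynomial.C (η ^ q) =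
          P - (Polynomial.X - Polynomial.C θ) ^ n * Polynomial.map σ P) :=
  carlitz_negative_twist_torsion_class_general hp hcard hn θ hθ hσ η hη
end
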